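/- Let E be a sequential effect space with an invertibility-preserving sequential product, i.e., (a ∘ b)⁻¹ = a⁻¹ ∘ b⁻¹ for all positive invertible a, b. Then the inverse map on positive invertible elements is an order anti-automorphism: a ≤ b if and only if b⁻¹ ≤ a⁻¹. -/

import Mathlib

/-- `x ≤ y` for a partially defined addition: there is `c` with `x + c` defined and `x + c = y`. -/
def pLe {E : Type*} (D : E → E → Prop) (add : E → E → E) (x y : E) : Prop :=
  ∃ c, D x c ∧ add x c = y

/-- An effect algebra: a partially defined commutative associative addition with zero,
the zero-one law and unique complements. `D a b` means "`a + b` is defined". -/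
structure EffectAlgebra (E : Type*) where
  D : E → E → Prop
  add : E → E → E
  zero : E
  one : E
  compl : E → E
  D_comm : ∀ {a b}, D a b → D b a
  add_comm' : ∀ {a b}, D a b → add a b = add b a
  D_assoc_left : ∀ {a b c}, D b c → D a (add b c) → D a b
  D_assoc : ∀ {a b c}, D b c → D a (add b c) → D (add a b) c
  add_assoc' : ∀ {a b c}, D b c → D a (add b c) → add a (add b c) = add (add a b) c
  D_zero : ∀ a, D a zero
  add_zero' : ∀ a, add a zero = a
  zero_one : ∀ {a}, D a one → a = zero
  D_compl : ∀ a, D a (compl a)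
  add_compl : ∀ a, add a (compl a) = one
  compl_unique : ∀ {a b}, D a b → add a b = one → b = compl a

namespace EffectAlgebra
variable {E : Type*} (EA : EffectAlgebra E)
/-- The canonical order of an effect algebra. -/
def le (a b : E) : Prop := pLe EA.D EA.add a b
end EffectAlgebra

/-- A sequential effect algebra (Gudder–Greechie): an effect algebra with a total
binary operation `seq` (the sequential product) satisfying the five axioms. -/
structure SEA (E : Type*) extends EffectAlgebra E where
  seq : E → E → E
  seq_D : ∀ {b c} (a : E), D b c → D (seq a b) (seq a c)
  seq_add : ∀ {b c} (a : E), D b c → seq a (add b c) = add (seq a b) (seq a c)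
  one_seq : ∀ a, seq one a = a
  seq_orth : ∀ {a b}, seq a b = zero → seq b a = zero
  seq_compl : ∀ {a b}, seq a b = seq b a → seq a (compl b) = seq (compl b) a
  seq_assoc : ∀ {a b}, seq a b = seq b a → ∀ c, seq a (seq b c) = seq (seq a b) c
  comm_seq : ∀ {a b c}, seq c a = seq a c → seq c b = seq b c →
    seq c (seq a b) = seq (seq a b) c
  comm_add : ∀ {a b c}, seq c a = seq a c → seq c b = seq b c → D a b →
    seq c (add a b) = seq (add a b) c

namespace SEA
variable {E : Type*} (SE : SEA E)
/-- The order of the underlying effect algebra. -/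
def le (a b : E) : Prop := pLe SE.D SE.add a b
end SEA

/-- A convex sequential effect algebra: a sequential effect algebra together with a
`[0,1]`-action (convex structure). -/
structure ConvexSEA (E : Type*) extends SEA E where
  smul : ℝ → E → E
  smul_D : ∀ {r s : ℝ} (a : E), 0 ≤ r → 0 ≤ s → r + s ≤ 1 → D (smul r a) (smul s a)
  smul_add_dist : ∀ {r s : ℝ} (a : E), 0 ≤ r → 0 ≤ s → r + s ≤ 1 →
    smul (r + s) a = add (smul r a) (smul s a)
  smul_mul : ∀ {r s : ℝ} (a : E), 0 ≤ r → r ≤ 1 → 0 ≤ s → s ≤ 1 →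
    smul (r * s) a = smul r (smul s a)
  zero_smul : ∀ a, smul 0 a = zero
  one_smul : ∀ a, smul 1 a = a
  smul_D_add : ∀ {r : ℝ} {a b : E}, 0 ≤ r → r ≤ 1 → D a b → D (smul r a) (smul r b)
  smul_add : ∀ {r : ℝ} {a b : E}, 0 ≤ r → r ≤ 1 → D a b →
    smul r (add a b) = add (smul r a) (smul r b)

/-- A sequential effect space: a convex σ-sequential effect algebra. Decreasing
sequences have infima (given by `inf`), which are preserved by the sequential
product, and under which commutation is stable. -/
structure SES (E : Type*) extends ConvexSEA E where
  inf : (ℕ → E) → E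
  inf_le : ∀ {f : ℕ → E}, (∀ n, pLe D add (f (n + 1)) (f n)) →
    ∀ n, pLe D add (inf f) (f n)
  le_inf : ∀ {f : ℕ → E}, (∀ n, pLe D add (f (n + 1)) (f n)) →
    ∀ x, (∀ n, pLe D add x (f n)) → pLe D add x (inf f)
  seq_inf : ∀ {f : ℕ → E} (b : E), (∀ n, pLe D add (f (n + 1)) (f n)) →
    seq b (inf f) = inf (fun n => seq b (f n))
  comm_inf : ∀ {f : ℕ → E} {b : E}, (∀ n, pLe D add (f (n + 1)) (f n)) →
    (∀ n, seq b (f n) = seq (f n) b) → seq b (inf f) = seq (inf f) b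

namespace SES
variable {E : Type*} (SE : SES E)
/-- The order of the underlying effect algebra of a sequential effect space. -/
def le (a b : E) : Prop := pLe SE.D SE.add a b
end SES

/-- The order unit space `V` associated to a sequential effect space, together with
the extension of the sequential product to the positive cone of `V`: `V` is an
Archimedean ordered real vector space with order unit `one`, whose unit interval,
with the restricted operations, is a sequential effect space (a convex σ-sequential
effect algebra), and `seq` is linear in its second argument and positively
homogeneous in its first. -/
structure OrderUnitSES (V : Type*) [AddCommGroup V] [PartialOrder V] [Module ℝ V] where
  one : V
  seq : V → V → V
  add_le_add : ∀ {a b : V} (c : V), a ≤ b → a + c ≤ b + c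
  smul_nonneg : ∀ {r : ℝ} {a : V}, 0 ≤ r → 0 ≤ a → 0 ≤ r • a
  orderUnit : ∀ v : V, ∃ n : ℕ, -((n : ℝ) • one) ≤ v ∧ v ≤ (n : ℝ) • one
  archimedean : ∀ v : V, (∀ n : ℕ, v ≤ (1 / ((n : ℝ) + 1)) • one) → v ≤ 0
  seq_add : ∀ a b c : V, seq a (b + c) = seq a b + seq a c
  seq_smul : ∀ (r : ℝ) (a b : V), seq a (r • b) = r • seq a b
  seq_homog : ∀ {r : ℝ} (a b : V), 0 ≤ r → seq (r • a) b = r • seq a b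
  one_seq : ∀ a : V, seq one a = a
  seq_pos : ∀ {a b : V}, 0 ≤ a → 0 ≤ b → 0 ≤ seq a b
  ses : SES {v : V // 0 ≤ v ∧ v ≤ one}
  ses_D : ∀ a b, ses.D a b ↔ a.1 + b.1 ≤ one
  ses_add : ∀ a b, ses.D a b → (ses.add a b).1 = a.1 + b.1
  ses_zero : ses.zero.1 = 0
  ses_one : ses.one.1 = one
  ses_compl : ∀ a, (ses.compl a).1 = one - a.1
  ses_smul : ∀ (r : ℝ) (a), 0 ≤ r → r ≤ 1 → (ses.smul r a).1 = r • a.1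
  ses_seq : ∀ a b, (ses.seq a b).1 = seq a.1 b.1

/-!
Suppose `a ≤ b`. Monotonicity of `L_{a⁻¹}` gives `1 = a⁻¹ ∘ a ≤ a⁻¹ ∘ b`, and invertibility
preservation applied to `a⁻¹` and `b` says that `a ∘ b⁻¹` is the inverse of `a⁻¹ ∘ b`. Hence
`a ∘ b⁻¹ = (a ∘ b⁻¹) ∘ 1 ≤ (a ∘ b⁻¹) ∘ (a⁻¹ ∘ b) = 1`, and applying `L_{a⁻¹}` once more,
`b⁻¹ = a⁻¹ ∘ (a ∘ b⁻¹) ≤ a⁻¹ ∘ 1 = a⁻¹`, using associativity for the commuting pair `a⁻¹, a`.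
The converse is the same argument with the roles of the elements and their inverses swapped.

The identities `c ∘ 1 = c` and associativity for commuting pairs are available only on the unit
interval; they reach the whole positive cone by scaling into it, as `∘` is homogeneous.
-/

namespace OrderUnitSES

variable {V : Type*} [AddCommGroup V] [PartialOrder V] [Module ℝ V] (OU : OrderUnitSES V)

theorem isOrderedAddMonoid (OU : OrderUnitSES V) : IsOrderedAddMonoid V where
  add_le_add_left _ _ h c := OU.add_le_add c h

theorem one_nonneg : (0 : V) ≤ OU.one :=
  OU.ses_one ▸ OU.ses.one.2.1

def seqLeft (c : V) : V →ₗ[ℝ] V where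
  toFun := OU.seq c
  map_add' := OU.seq_add c
  map_smul' r x := OU.seq_smul r c x

theorem seq_mono {c x y : V} (hc : 0 ≤ c) (hxy : x ≤ y) : OU.seq c x ≤ OU.seq c y := by
  have := OU.isOrderedAddMonoid
  have h : 0 ≤ OU.seqLeft c (y - x) := OU.seq_pos hc (sub_nonneg.mpr hxy)
  rwa [map_sub, sub_nonneg] at h

theorem exists_pos_smul_mem_unitInterval {v : V} (hv : 0 ≤ v) :
    ∃ r : ℝ, 0 < r ∧ ∃ x : {w : V // 0 ≤ w ∧ w ≤ OU.one}, x.1 = r • v := by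
  have := OU.isOrderedAddMonoid
  obtain ⟨n, -, hn⟩ := OU.orderUnit v
  set r : ℝ := 1 / ((n : ℝ) + 1)
  have hr : 0 < r := by positivity
  have hrn : r * n + r = 1 := by simp only [r]; field_simp
  have hle : r • v ≤ OU.one := by
    have hsplit : OU.one - r • v = r • (((n : ℝ) • OU.one - v) + OU.one) := by
      rw [smul_add, smul_sub, smul_smul, sub_add_eq_add_sub, ← add_smul, hrn, one_smul]
    rw [← sub_nonneg, hsplit]
    exact OU.smul_nonneg hr.le (add_nonneg (sub_nonneg.mpr hn) OU.one_nonneg)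
  exact ⟨r, hr, ⟨r • v, OU.smul_nonneg hr.le hv, hle⟩, rfl⟩

theorem ses_seq_one (x : {w : V // 0 ≤ w ∧ w ≤ OU.one}) : OU.ses.seq x OU.ses.one = x := by
  have hzero : OU.ses.seq x OU.ses.zero = OU.ses.seq OU.ses.zero x := by
    apply Subtype.ext
    rw [OU.ses_seq, OU.ses_seq, OU.ses_zero]
    calc OU.seq x.1 0 = 0 := (OU.seqLeft x.1).map_zero
      _ = OU.seq ((0 : ℝ) • 0) x.1 := by rw [OU.seq_homog _ _ le_rfl, zero_smul]
      _ = OU.seq 0 x.1 := by rw [zero_smul]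
  have hcompl : OU.ses.compl OU.ses.zero = OU.ses.one :=
    Subtype.ext (by rw [OU.ses_compl, OU.ses_zero, OU.ses_one, sub_zero])
  rw [← hcompl, OU.ses.seq_compl hzero, hcompl, OU.ses.one_seq]

theorem seq_one {c : V} (hc : 0 ≤ c) : OU.seq c OU.one = c := by
  obtain ⟨r, hr, x, hx⟩ := OU.exists_pos_smul_mem_unitInterval hc
  have h := congrArg Subtype.val (OU.ses_seq_one x)
  rw [OU.ses_seq, OU.ses_one, hx, OU.seq_homog _ _ hr.le] at h
  exact smul_right_injective V hr.ne' h

theorem seq_assoc_of_commute {u v w : V} (hu : 0 ≤ u) (hv : 0 ≤ v) (hw : 0 ≤ w)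
    (huv : OU.seq u v = OU.seq v u) :
    OU.seq u (OU.seq v w) = OU.seq (OU.seq u v) w := by
  obtain ⟨r, hr, x, hx⟩ := OU.exists_pos_smul_mem_unitInterval hu
  obtain ⟨s, hs, y, hy⟩ := OU.exists_pos_smul_mem_unitInterval hv
  obtain ⟨t, ht, z, hz⟩ := OU.exists_pos_smul_mem_unitInterval hw
  have hxy : OU.ses.seq x y = OU.ses.seq y x := by
    apply Subtype.ext
    rw [OU.ses_seq, OU.ses_seq, hx, hy, OU.seq_homog _ _ hr.le, OU.seq_homog _ _ hs.le,
      OU.seq_smul, OU.seq_smul, huv, smul_comm]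
  have h := congrArg Subtype.val (OU.ses.seq_assoc hxy z)
  simp only [OU.ses_seq, hx, hy, hz, OU.seq_homog _ _ hr.le, OU.seq_homog _ _ hs.le,
    OU.seq_smul, OU.seq_homog _ _ (mul_pos hr hs).le, smul_smul] at h
  refine smul_right_injective V (mul_pos (mul_pos hr hs) ht).ne' ?_
  simpa only [mul_comm, mul_left_comm] using h

theorem le_seq_of_one_le {d e : V} (hd : 0 ≤ d) (he : OU.one ≤ e) : d ≤ OU.seq d e :=
  calc d = OU.seq d OU.one := (OU.seq_one hd).symm
    _ ≤ OU.seq d e := OU.seq_mono hd he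

theorem inv_le_inv_of_le {a b ai bi : V} (ha : 0 ≤ a) (hai : 0 ≤ ai) (hbi : 0 ≤ bi)
    (ha1 : OU.seq a ai = OU.one) (ha2 : OU.seq ai a = OU.one)
    (hprod : OU.seq (OU.seq a bi) (OU.seq ai b) = OU.one) (hab : a ≤ b) : bi ≤ ai := by
  have hone : OU.one ≤ OU.seq ai b := ha2 ▸ OU.seq_mono hai hab
  have hd : OU.seq a bi ≤ OU.one :=
    hprod ▸ OU.le_seq_of_one_le (OU.seq_pos ha hbi) hone
  calc bi = OU.seq ai (OU.seq a bi) := by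
        rw [OU.seq_assoc_of_commute hai ha hbi (ha2.trans ha1.symm), ha2, OU.one_seq]
    _ ≤ OU.seq ai OU.one := OU.seq_mono hai hd
    _ = ai := OU.seq_one hai

end OrderUnitSES

/-- If the sequential product of a sequential effect space preserves invertibility,
i.e. `(a ∘ b)⁻¹ = a⁻¹ ∘ b⁻¹` for all positive invertible `a, b`, then the inverse map
is an order anti-automorphism of the positive invertible elements:
`a ≤ b` if and only if `b⁻¹ ≤ a⁻¹`. -/
theorem invPreserving_inverse_antitone {V : Type*} [AddCommGroup V]
    [PartialOrder V] [Module ℝ V] (OU : OrderUnitSES V)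
    (hpres : ∀ a b ai bi : V, 0 ≤ a → 0 ≤ b → 0 ≤ ai → 0 ≤ bi →
      OU.seq a ai = OU.one → OU.seq ai a = OU.one →
      OU.seq b bi = OU.one → OU.seq bi b = OU.one →
      OU.seq (OU.seq a b) (OU.seq ai bi) = OU.one ∧
      OU.seq (OU.seq ai bi) (OU.seq a b) = OU.one)
    (a b ai bi : V) (ha : 0 ≤ a) (hb : 0 ≤ b) (hai : 0 ≤ ai) (hbi : 0 ≤ bi)
    (ha1 : OU.seq a ai = OU.one) (ha2 : OU.seq ai a = OU.one)
    (hb1 : OU.seq b bi = OU.one) (hb2 : OU.seq bi b = OU.one) :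
    a ≤ b ↔ bi ≤ ai :=
  ⟨OU.inv_le_inv_of_le ha hai hbi ha1 ha2 (hpres ai b a bi hai hb ha hbi ha2 ha1 hb1 hb2).2,
    OU.inv_le_inv_of_le hbi hb ha hb2 hb1 (hpres b ai bi a hb hai hbi ha hb1 hb2 ha2 ha1).2⟩
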